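/- arXiv:2512.00525 — 2 statements merged into one kernel-verified Lean document; each statement's English description precedes it below -/
import Mathlib

section
/- Let α be a unit of O and let (F_n)_{n≥0} be a sequence of polynomials in K[T] with deg F_n < p^n for every n. Assume: (1) there exists an integer t ≥ 0 such that ϖ^t·F_n ∈ O[T] for all n ≥ 0 (so the μ-invariants of the nonzero F_n are bounded below by −t); and (2) F_n − α^{-1}·ν_n·F_{n-1} ∈ O[T] for all n ≥ 1. If there exists an integer m with F_m ≠ 0 and μ(F_m) < 0, then for every n ≥ 0 one has F_n ≠ 0, μ(F_n) = μ(F_0) < 0, and λ(F_n) = p^n − 1. -/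
/-!
Over `𝔽_p` the Frobenius gives `νₙ = Σ_{k<p} (1 + T^(pⁿ⁻¹))^k = T^(pⁿ - pⁿ⁻¹)`, so
`νₙ = T^(pⁿ - pⁿ⁻¹) + p·(integral)` with `ord_ϖ(p) ≥ 1`. Hence if `μ(Fₙ₋₁) = μ < 0`, then
`Fₙ ≡ α⁻¹ T^(pⁿ - pⁿ⁻¹) Fₙ₋₁` modulo polynomials all of whose coefficients have valuation
`> μ` (the integral error term of (2) is absorbed because `μ < 0`). Multiplying by a unit times
`T^(pⁿ - pⁿ⁻¹)` keeps `μ` and shifts `λ` by `pⁿ - pⁿ⁻¹`; as `deg F₀ < 1` forces `λ(F₀) = 0`, the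
shifts add up to `λ(Fₙ) = pⁿ - 1`. That `μ(F₀) < 0` at all follows because integrality of `F₀`
would propagate to every `Fₙ` through (2).
-/

open Polynomial

/-- The axioms of the normalized additive valuation `ord_ϖ : K → ℤ` of a discrete
valuation ring `O` with uniformizer `ϖ` and fraction field `K`, recorded on the
nonzero elements of `K`: multiplicativity and the ultrametric inequality. -/
def IsOrd {K : Type*} [Field K] (v : K → ℤ) : Prop :=
  (∀ x y : K, x ≠ 0 → y ≠ 0 → v (x * y) = v x + v y) ∧
  (∀ x y : K, x ≠ 0 → y ≠ 0 → x + y ≠ 0 → min (v x) (v y) ≤ v (x + y))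

/-- The μ-invariant of a (nonzero) polynomial `F = Σ aᵢ Tⁱ` over `K`:
`μ(F) = minᵢ ord_ϖ(aᵢ)`. -/
noncomputable def muInv {K : Type*} [Field K] (v : K → ℤ) (F : Polynomial K) : ℤ :=
  sInf {m : ℤ | ∃ i, F.coeff i ≠ 0 ∧ v (F.coeff i) = m}

/-- The λ-invariant of a (nonzero) polynomial over `K`:
`λ(F) = min { i : ord_ϖ(aᵢ) = μ(F) }`. -/
noncomputable def lamInv {K : Type*} [Field K] (v : K → ℤ) (F : Polynomial K) : ℕ :=
  sInf {i : ℕ | F.coeff i ≠ 0 ∧ v (F.coeff i) = muInv v F}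

/-- `F ∈ O[T]`: all coefficients lie in the valuation ring, i.e. have valuation `≥ 0`. -/
def IntegralPoly {K : Type*} [Field K] (v : K → ℤ) (F : Polynomial K) : Prop :=
  ∀ i, F.coeff i ≠ 0 → 0 ≤ v (F.coeff i)

/-- The residue field `O/(ϖ)` has characteristic `p`, i.e. `p` lies in the maximal
ideal `(ϖ)` of `O` (equivalently `ord_ϖ(p) ≥ 1`, or `p = 0` in `K`). -/
def ResidueCharP {K : Type*} [Field K] (v : K → ℤ) (p : ℕ) : Prop :=
  (p : K) = 0 ∨ 1 ≤ v (p : K)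

/-- `ν_n(T) = Σ_{k=0}^{p-1} (1+T)^{k·p^(n-1)}`, the polynomial representing the
corestriction map `cor_{n-1}^n : K[G_{n-1}] → K[G_n]`. -/
noncomputable def nuPoly (K : Type*) [Field K] (p n : ℕ) : Polynomial K :=
  ∑ k ∈ Finset.range p, (1 + Polynomial.X) ^ (k * p ^ (n - 1))


open Finset

namespace AddValuation

variable {R Γ₀ : Type*} [Ring R] [LinearOrderedAddCommMonoidWithTop Γ₀] (w : AddValuation R Γ₀)

theorem zero_le_natCast (n : ℕ) : 0 ≤ w n := by
  induction n with
  | zero => simp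
  | succ n ih => rw [Nat.cast_succ]; exact w.map_le_add ih w.map_one.ge

theorem zero_le_intCast (n : ℤ) : 0 ≤ w n := by
  cases n with
  | ofNat n => simpa using w.zero_le_natCast n
  | negSucc n => rw [Int.cast_negSucc, w.map_neg]; exact w.zero_le_natCast (n + 1)

theorem map_coeff_C_mul {u : R} (hu : w u = 0) (F : R[X]) (i : ℕ) :
    w ((C u * F).coeff i) = w (F.coeff i) := by
  rw [coeff_C_mul, w.map_mul, hu, zero_add]

theorem le_map_coeff_mul {R : Type*} [CommRing R] (w : AddValuation R Γ₀) {F G : R[X]}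
    {a b : Γ₀} (hF : ∀ i, a ≤ w (F.coeff i)) (hG : ∀ i, b ≤ w (G.coeff i)) (i : ℕ) :
    a + b ≤ w ((F * G).coeff i) := by
  rw [coeff_mul]
  exact w.map_le_sum fun x _ => (w.map_mul _ _).symm ▸ add_le_add (hF _) (hG _)

end AddValuation

namespace IsOrd

variable {K : Type*} [Field K] {v : K → ℤ}

theorem map_one (hv : IsOrd v) : v 1 = 0 := by
  have := hv.1 1 1 one_ne_zero one_ne_zero
  rw [mul_one] at this
  omega

open Classical in
noncomputable def toAddValuation (hv : IsOrd v) : AddValuation K (WithTop ℤ) :=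
  AddValuation.of (fun x => if x = 0 then ⊤ else (v x : WithTop ℤ)) (if_pos rfl)
    (by simp [hv.map_one])
    (fun x y => by
      by_cases hx : x = 0; · simp [hx]
      by_cases hy : y = 0; · simp [hy]
      by_cases hxy : x + y = 0; · simp [hxy]
      simp only [hx, hy, hxy, if_false]
      exact_mod_cast hv.2 x y hx hy hxy)
    (fun x y => by
      by_cases hx : x = 0; · simp [hx]
      by_cases hy : y = 0; · simp [hy]
      simp only [hx, hy, mul_ne_zero hx hy, if_false]
      exact_mod_cast hv.1 x y hx hy)

theorem toAddValuation_of_ne_zero (hv : IsOrd v) {x : K} (hx : x ≠ 0) :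
    hv.toAddValuation x = v x := by
  simp [toAddValuation, hx]

theorem integralPoly_iff (hv : IsOrd v) {F : K[X]} :
    IntegralPoly v F ↔ ∀ i, 0 ≤ hv.toAddValuation (F.coeff i) := by
  refine forall_congr' fun i => ?_
  by_cases hi : F.coeff i = 0
  · simp [hi]
  · simp [hi, hv.toAddValuation_of_ne_zero hi]

end IsOrd

section HasMuLambda

variable {R : Type*} [Ring R] (w : AddValuation R (WithTop ℤ))

/-- For `w = ord_ϖ` this says `μ(F) = μ` and `λ(F) = l`. -/
def HasMuLambda (F : R[X]) (μ : ℤ) (l : ℕ) : Prop :=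
  (∀ i, (μ : WithTop ℤ) ≤ w (F.coeff i)) ∧ w (F.coeff l) = μ ∧
    ∀ i < l, (μ : WithTop ℤ) < w (F.coeff i)

variable {w} {F G : R[X]} {μ : ℤ} {l : ℕ}

theorem HasMuLambda.coeff_ne_zero (h : HasMuLambda w F μ l) : F.coeff l ≠ 0 := by
  intro h0
  simpa [h0] using h.2.1

theorem HasMuLambda.ne_zero (h : HasMuLambda w F μ l) : F ≠ 0 := by
  rintro rfl
  exact h.coeff_ne_zero (coeff_zero l)

theorem HasMuLambda.lt_of_degree_lt (h : HasMuLambda w F μ l) {N : ℕ} (hN : F.degree < N) :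
    l < N := by
  by_contra! hl
  exact h.coeff_ne_zero (coeff_eq_zero_of_degree_lt (hN.trans_le (by exact_mod_cast hl)))

theorem HasMuLambda.add (h : HasMuLambda w F μ l) (hG : ∀ i, (μ : WithTop ℤ) < w (G.coeff i)) :
    HasMuLambda w (F + G) μ l := by
  obtain ⟨hle, heq, hlt⟩ := h
  refine ⟨fun i => ?_, ?_, fun i hi => ?_⟩
  · rw [coeff_add]; exact w.map_le_add (hle i) (hG i).le
  · rw [coeff_add, w.map_add_eq_of_lt_left (heq ▸ hG l), heq]
  · rw [coeff_add]; exact w.map_lt_add (hlt i hi) (hG i)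

theorem HasMuLambda.C_mul_X_pow_mul (h : HasMuLambda w F μ l) {u : R} (hu : w u = 0) (d : ℕ) :
    HasMuLambda w (C u * (X ^ d * F)) μ (d + l) := by
  obtain ⟨hle, heq, hlt⟩ := h
  simp only [HasMuLambda, w.map_coeff_C_mul hu, coeff_X_pow_mul']
  refine ⟨fun i => ?_, by simpa using heq, fun i hi => ?_⟩
  · split_ifs
    · exact hle _
    · simp
  · split_ifs
    · exact hlt _ (by omega)
    · simp

end HasMuLambda

namespace IsOrd

variable {K : Type*} [Field K] {v : K → ℤ} {F : K[X]} {μ : ℤ} {l : ℕ}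

theorem muInv_eq_of_hasMuLambda (hv : IsOrd v) (h : HasMuLambda hv.toAddValuation F μ l) :
    muInv v F = μ := by
  refine IsLeast.csInf_eq ⟨⟨l, h.coeff_ne_zero, ?_⟩, ?_⟩
  · have := h.2.1
    rwa [hv.toAddValuation_of_ne_zero h.coeff_ne_zero, WithTop.coe_inj] at this
  · rintro _ ⟨i, hi, rfl⟩
    have := h.1 i
    rwa [hv.toAddValuation_of_ne_zero hi, WithTop.coe_le_coe] at this

theorem lamInv_eq_of_hasMuLambda (hv : IsOrd v) (h : HasMuLambda hv.toAddValuation F μ l) :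
    lamInv v F = l := by
  rw [lamInv, hv.muInv_eq_of_hasMuLambda h]
  refine IsLeast.csInf_eq ⟨⟨h.coeff_ne_zero, ?_⟩, fun i ⟨hi, hvi⟩ => ?_⟩
  · have := h.2.1
    rwa [hv.toAddValuation_of_ne_zero h.coeff_ne_zero, WithTop.coe_inj] at this
  · by_contra! hil
    have := h.2.2 i hil
    rw [hv.toAddValuation_of_ne_zero hi, hvi] at this
    exact lt_irrefl _ this

theorem hasMuLambda_muInv_lamInv (hv : IsOrd v) (hF : F ≠ 0) :
    HasMuLambda hv.toAddValuation F (muInv v F) (lamInv v F) := by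
  set S := {m : ℤ | ∃ i, F.coeff i ≠ 0 ∧ v (F.coeff i) = m}
  have hfin : S.Finite := (F.support.finite_toSet.image fun i => v (F.coeff i)).subset <| by
    rintro _ ⟨i, hi, rfl⟩
    exact ⟨i, mem_support_iff.mpr hi, rfl⟩
  obtain ⟨i, hi⟩ := support_nonempty.mpr hF
  have hmem : muInv v F ∈ S := Set.Nonempty.csInf_mem ⟨_, i, mem_support_iff.mp hi, rfl⟩ hfin
  have hle : ∀ i, F.coeff i ≠ 0 → muInv v F ≤ v (F.coeff i) :=
    fun i hi => csInf_le hfin.bddBelow ⟨i, hi, rfl⟩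
  obtain ⟨hl0, hl⟩ : F.coeff (lamInv v F) ≠ 0 ∧ v (F.coeff (lamInv v F)) = muInv v F :=
    Nat.sInf_mem hmem
  refine ⟨fun i => ?_, by rw [hv.toAddValuation_of_ne_zero hl0, hl], fun i hi => ?_⟩
  · by_cases hi : F.coeff i = 0
    · simp [hi]
    · rw [hv.toAddValuation_of_ne_zero hi]
      exact_mod_cast hle i hi
  · by_cases hi0 : F.coeff i = 0
    · simp [hi0]
    · rw [hv.toAddValuation_of_ne_zero hi0]
      have hne : v (F.coeff i) ≠ muInv v F := fun h => Nat.notMem_of_lt_sInf hi ⟨hi0, h⟩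
      exact_mod_cast (hle i hi0).lt_of_ne' hne

theorem integralPoly_iff_of_hasMuLambda (hv : IsOrd v)
    (h : HasMuLambda hv.toAddValuation F μ l) : IntegralPoly v F ↔ 0 ≤ μ := by
  rw [hv.integralPoly_iff]
  refine ⟨fun hF => ?_, fun hμ i => ?_⟩
  · have := hF l
    rwa [h.2.1, WithTop.coe_nonneg] at this
  · exact (WithTop.coe_nonneg.mpr hμ).trans (h.1 i)

theorem not_integralPoly_iff (hv : IsOrd v) : ¬IntegralPoly v F ↔ F ≠ 0 ∧ muInv v F < 0 := by
  by_cases hF : F = 0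
  · simp [hF, IntegralPoly]
  · simp [hv.integralPoly_iff_of_hasMuLambda (hv.hasMuLambda_muInv_lamInv hF), hF]

end IsOrd

theorem sum_range_one_add_X_pow_mul_eq {R : Type*} [CommRing R] (p : ℕ) [Fact p.Prime]
    [CharP R p] (m : ℕ) :
    ∑ k ∈ range p, (1 + X : R[X]) ^ (k * p ^ m) = X ^ (p ^ m * (p - 1)) := by
  have frob : ∀ k, (1 + X : R[X]) ^ (k * p ^ m) = (1 + X ^ p ^ m) ^ k := fun k => by
    rw [mul_comm, pow_mul, add_pow_char_pow, one_pow]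
  simp_rw [frob]
  refine (isRegular_X_pow (p ^ m)).right.eq_iff.mp ?_
  have geom := geom_sum_mul (1 + X ^ p ^ m : R[X]) p
  rw [add_sub_cancel_left] at geom
  rw [geom, add_pow_char, one_pow, add_sub_cancel_left, ← pow_mul, ← pow_add]
  congr 1
  zify [(Fact.out : p.Prime).one_le]
  ring

theorem nuPoly_eq_map (K : Type*) [Field K] (p n : ℕ) :
    nuPoly K p n =
      (∑ k ∈ range p, (1 + X : ℤ[X]) ^ (k * p ^ (n - 1))).map (Int.castRingHom K) := by
  simp [nuPoly, Polynomial.map_sum]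

namespace IsOrd

variable {K : Type*} [Field K] {v : K → ℤ}

theorem zero_le_coeff_nuPoly (hv : IsOrd v) (p n i : ℕ) :
    0 ≤ hv.toAddValuation ((nuPoly K p n).coeff i) := by
  rw [nuPoly_eq_map, coeff_map, eq_intCast]
  exact AddValuation.zero_le_intCast _ _

theorem one_le_natCast (hv : IsOrd v) {p : ℕ} (hres : ResidueCharP v p) :
    1 ≤ hv.toAddValuation (p : K) := by
  by_cases h0 : (p : K) = 0
  · simp [h0]
  · rw [hv.toAddValuation_of_ne_zero h0]
    exact_mod_cast hres.resolve_left h0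

theorem one_le_coeff_nuPoly_sub_X_pow (hv : IsOrd v) {p : ℕ} (hp : p.Prime)
    (hres : ResidueCharP v p) (n i : ℕ) :
    1 ≤ hv.toAddValuation ((nuPoly K p n - X ^ (p ^ (n - 1) * (p - 1))).coeff i) := by
  have := Fact.mk hp
  set P : ℤ[X] := ∑ k ∈ range p, (1 + X) ^ (k * p ^ (n - 1)) - X ^ (p ^ (n - 1) * (p - 1))
  have hPK : nuPoly K p n - X ^ (p ^ (n - 1) * (p - 1)) = P.map (Int.castRingHom K) := by
    simp [P, nuPoly_eq_map]
  have hPp : P.map (Int.castRingHom (ZMod p)) = 0 := by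
    simp [P, Polynomial.map_sum, sum_range_one_add_X_pow_mul_eq]
  obtain ⟨c, hc⟩ : (p : ℤ) ∣ P.coeff i := by
    rw [← ZMod.intCast_zmod_eq_zero_iff_dvd]
    simpa using congr_arg (coeff · i) hPp
  rw [hPK, coeff_map, hc, eq_intCast, Int.cast_mul, Int.cast_natCast, AddValuation.map_mul]
  simpa using add_le_add (hv.one_le_natCast hres) (AddValuation.zero_le_intCast _ c)

theorem hasMuLambda_of_integralPoly_sub (hv : IsOrd v) {p : ℕ} (hp : p.Prime)
    (hres : ResidueCharP v p) {u : K} (hu : hv.toAddValuation u = 0) (n : ℕ) {G H : K[X]}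
    {μ : ℤ} {l : ℕ} (hG : HasMuLambda hv.toAddValuation G μ l) (hμ : μ < 0)
    (hA : IntegralPoly v (H - C u * nuPoly K p n * G)) :
    HasMuLambda hv.toAddValuation H μ (p ^ (n - 1) * (p - 1) + l) := by
  set d := p ^ (n - 1) * (p - 1)
  have hH : H = C u * (X ^ d * G) +
      (C u * ((nuPoly K p n - X ^ d) * G) + (H - C u * nuPoly K p n * G)) := by ring
  have hrest (i : ℕ) : (μ : WithTop ℤ) < hv.toAddValuation
      ((C u * ((nuPoly K p n - X ^ d) * G) + (H - C u * nuPoly K p n * G)).coeff i) := by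
    rw [coeff_add]
    refine hv.toAddValuation.map_lt_add ?_ ?_
    · rw [AddValuation.map_coeff_C_mul _ hu]
      calc (μ : WithTop ℤ) < 1 + μ := by exact_mod_cast lt_one_add μ
        _ ≤ _ := AddValuation.le_map_coeff_mul _
          (hv.one_le_coeff_nuPoly_sub_X_pow hp hres n) hG.1 i
    · exact (WithTop.coe_lt_zero.mpr hμ).trans_le (hv.integralPoly_iff.mp hA i)
  rw [hH]
  exact (hG.C_mul_X_pow_mul hu d).add hrest

theorem integralPoly_of_integralPoly_sub (hv : IsOrd v) {u : K} (hu : 0 ≤ hv.toAddValuation u)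
    (p n : ℕ) {G H : K[X]} (hG : IntegralPoly v G)
    (hA : IntegralPoly v (H - C u * nuPoly K p n * G)) : IntegralPoly v H := by
  rw [hv.integralPoly_iff] at hG hA ⊢
  intro i
  rw [← sub_add_cancel H (C u * nuPoly K p n * G), coeff_add]
  refine hv.toAddValuation.map_le_add (hA i) ?_
  rw [mul_assoc, coeff_C_mul, AddValuation.map_mul]
  simpa using add_le_add hu (AddValuation.le_map_coeff_mul _ (hv.zero_le_coeff_nuPoly p n) hG i)

end IsOrd

theorem maximality_of_lambda_invariants_general
    {K : Type*} [Field K] (p : ℕ) (hp : p.Prime)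
    (v : K → ℤ) (hv : IsOrd v) (hres : ResidueCharP v p)
    (α : K) (hα0 : α ≠ 0) (hα : v α = 0)
    (F : ℕ → Polynomial K)
    (hdeg : ∀ n, (F n).degree < (p ^ n : ℕ))
    -- (2): Fₙ − α⁻¹·νₙ·Fₙ₋₁ ∈ O[T] for all n ≥ 1
    (hA : ∀ n, 1 ≤ n →
      IntegralPoly v (F n - Polynomial.C α⁻¹ * nuPoly K p n * F (n - 1)))
    (hm : ∃ m, F m ≠ 0 ∧ muInv v (F m) < 0) :
    muInv v (F 0) < 0 ∧
      ∀ n, F n ≠ 0 ∧ muInv v (F n) = muInv v (F 0) ∧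
        lamInv v (F n) = p ^ n - 1 := by
  obtain ⟨m, hFm, hμm⟩ := hm
  have hu : hv.toAddValuation α⁻¹ = 0 := by
    rw [AddValuation.map_inv, hv.toAddValuation_of_ne_zero hα0, hα]
    rfl
  have hrec (n : ℕ) : IntegralPoly v (F (n + 1) - C α⁻¹ * nuPoly K p (n + 1) * F n) :=
    hA (n + 1) n.succ_pos
  obtain ⟨hF0, hμ0⟩ : F 0 ≠ 0 ∧ muInv v (F 0) < 0 := by
    refine hv.not_integralPoly_iff.mp fun h0 => hv.not_integralPoly_iff.mpr ⟨hFm, hμm⟩ ?_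
    have hint (n : ℕ) : IntegralPoly v (F n) := by
      induction n with
      | zero => exact h0
      | succ n ih => exact hv.integralPoly_of_integralPoly_sub hu.ge p (n + 1) ih (hrec n)
    exact hint m
  have key (n : ℕ) : HasMuLambda hv.toAddValuation (F n) (muInv v (F 0)) (p ^ n - 1) := by
    induction n with
    | zero =>
      have h := hv.hasMuLambda_muInv_lamInv hF0
      have h0 : lamInv v (F 0) = 0 := by simpa using h.lt_of_degree_lt (hdeg 0)
      simpa [h0] using h
    | succ n ih =>
      convert hv.hasMuLambda_of_integralPoly_sub hp hres hu (n + 1) ih hμ0 (hrec n) using 1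
      rw [Nat.add_sub_cancel]
      zify [Nat.one_le_pow n p hp.pos, hp.one_le, Nat.one_le_pow (n + 1) p hp.pos]
      ring
  exact ⟨hμ0, fun n => ⟨(key n).ne_zero, hv.muInv_eq_of_hasMuLambda (key n),
    hv.lamInv_eq_of_hasMuLambda (key n)⟩⟩

/-- Theorem 3.4: if some Mazur–Tate element has negative μ-invariant, then all of
them do, the μ-invariants are constant, and the λ-invariants are maximal. -/
theorem maximality_of_lambda_invariants
    {K : Type*} [Field K] (p : ℕ) (hp : p.Prime)
    (v : K → ℤ) (hv : IsOrd v) (hres : ResidueCharP v p)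
    (α : K) (hα0 : α ≠ 0) (hα : v α = 0)
    (F : ℕ → Polynomial K)
    (hdeg : ∀ n, (F n).degree < (p ^ n : ℕ))
    -- (1): there is t ≥ 0 with ϖ^t·Fₙ ∈ O[T] for all n
    (ht : ∃ t : ℕ, ∀ n i, (F n).coeff i ≠ 0 → -(t : ℤ) ≤ v ((F n).coeff i))
    -- (2): Fₙ − α⁻¹·νₙ·Fₙ₋₁ ∈ O[T] for all n ≥ 1
    (hA : ∀ n, 1 ≤ n →
      IntegralPoly v (F n - Polynomial.C α⁻¹ * nuPoly K p n * F (n - 1)))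
    (hm : ∃ m, F m ≠ 0 ∧ muInv v (F m) < 0) :
    muInv v (F 0) < 0 ∧
      ∀ n, F n ≠ 0 ∧ muInv v (F n) = muInv v (F 0) ∧
        lamInv v (F n) = p ^ n - 1 :=
  maximality_of_lambda_invariants_general p hp v hv hres α hα0 hα F hdeg hA hm
end

section
/- Let α be a unit of O, let λ₀ ≥ 0 and n₀ ≥ 1 be integers, and let (F_n)_{n≥0} be a sequence of nonzero polynomials in K[T] with deg F_n < p^n for every n. Assume there exists an integer t ≥ 0 with ϖ^t·F_n ∈ O[T] for all n, and that for every n ≥ 1 the polynomial A_n := F_n − α^{-1}·ν_n·F_{n-1} lies in O[T]; assume moreover that for all n ≥ n₀ one has A_n ≠ 0, μ(A_n) = 0 and λ(A_n) = λ₀. Then exactly one of the following holds: (a) F_n ∈ O[T] for all n ≥ 0, and in this case there exists N such that μ(F_n) = 0 and λ(F_n) = λ₀ for all n ≥ N; or (b) F_n ∉ O[T] for all n ≥ 0, and in this case μ(F_n) = μ(F_0) < 0 and λ(F_n) = p^n − 1 for all n ≥ 0. -/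
open Polynomial

section AuxOrd

variable {K : Type*} [Field K] {v : K → ℤ}

lemma ord_one (hv : IsOrd v) : v 1 = 0 := by
  have := hv.1 1 1 one_ne_zero one_ne_zero
  simp at this; omega

lemma ord_neg (hv : IsOrd v) {x : K} (hx : x ≠ 0) : v (-x) = v x := by
  have h1 : v (-1 : K) = 0 := by
    have := hv.1 (-1 : K) (-1) (by norm_num) (by norm_num)
    simp [ord_one hv] at this; omega
  have := hv.1 (-1 : K) x (by norm_num) hx
  simp [h1] at this
  simpa using this

lemma ord_inv (hv : IsOrd v) {x : K} (hx : x ≠ 0) : v x⁻¹ = - v x := by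
  have := hv.1 x x⁻¹ hx (inv_ne_zero hx)
  rw [mul_inv_cancel₀ hx, ord_one hv] at this; omega

lemma ord_add_ge (hv : IsOrd v) {x y : K} {m : ℤ} (hx : x ≠ 0 → m ≤ v x)
    (hy : y ≠ 0 → m ≤ v y) (h : x + y ≠ 0) : m ≤ v (x + y) := by
  rcases eq_or_ne x 0 with rfl | hx0
  · simpa using hy (by simpa using h)
  rcases eq_or_ne y 0 with rfl | hy0
  · simpa using hx hx0
  have := hv.2 x y hx0 hy0 h
  have h1 := hx hx0; have h2 := hy hy0
  omega

lemma ord_add_gt (hv : IsOrd v) {x y : K} {m : ℤ} (hx : x ≠ 0 → m < v x)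
    (hy : y ≠ 0 → m < v y) (h : x + y ≠ 0) : m < v (x + y) := by
  rcases eq_or_ne x 0 with rfl | hx0
  · simpa using hy (by simpa using h)
  rcases eq_or_ne y 0 with rfl | hy0
  · simpa using hx hx0
  have := hv.2 x y hx0 hy0 h
  have h1 := hx hx0; have h2 := hy hy0
  omega

lemma ord_add_eq (hv : IsOrd v) {x y : K} {m : ℤ} (hx : x ≠ 0) (hvx : v x = m)
    (hy : y ≠ 0 → m < v y) : x + y ≠ 0 ∧ v (x + y) = m := by
  rcases eq_or_ne y 0 with rfl | hy0
  · simpa using ⟨hx, hvx⟩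
  have hy' := hy hy0
  have hne : x + y ≠ 0 := by
    intro h
    have hyx : y = -x := by linear_combination h
    rw [hyx, ord_neg hv hx, hvx] at hy'; omega
  refine ⟨hne, ?_⟩
  have h1 := hv.2 x y hx hy0 hne
  have h2 : min (v (x+y)) (v (-y)) ≤ v (x + y + -y) := by
    apply hv.2 _ _ hne (neg_ne_zero.mpr hy0)
    simpa using hx
  rw [ord_neg hv hy0] at h2
  simp only [add_neg_cancel_right] at h2
  omega

lemma ord_sum_ge (hv : IsOrd v) {ι : Type*} {s : Finset ι} {f : ι → K} {m : ℤ}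
    (h : ∀ i ∈ s, f i ≠ 0 → m ≤ v (f i)) (hs : ∑ i ∈ s, f i ≠ 0) :
    m ≤ v (∑ i ∈ s, f i) := by
  classical
  induction s using Finset.induction_on with
  | empty => simp at hs
  | @insert a s ha ih =>
    rw [Finset.sum_insert ha] at hs ⊢
    refine ord_add_ge hv (fun h' => h a (Finset.mem_insert_self a s) h') ?_ hs
    intro h'
    exact ih (fun i hi => h i (Finset.mem_insert_of_mem hi)) h'

lemma ord_sum_gt (hv : IsOrd v) {ι : Type*} {s : Finset ι} {f : ι → K} {m : ℤ}
    (h : ∀ i ∈ s, f i ≠ 0 → m < v (f i)) (hs : ∑ i ∈ s, f i ≠ 0) :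
    m < v (∑ i ∈ s, f i) := by
  classical
  induction s using Finset.induction_on with
  | empty => simp at hs
  | @insert a s ha ih =>
    rw [Finset.sum_insert ha] at hs ⊢
    refine ord_add_gt hv (fun h' => h a (Finset.mem_insert_self a s) h') ?_ hs
    intro h'
    exact ih (fun i hi => h i (Finset.mem_insert_of_mem hi)) h'

lemma ord_natCast (hv : IsOrd v) (k : ℕ) (hk : (k : K) ≠ 0) : 0 ≤ v (k : K) := by
  induction k with
  | zero => simp at hk
  | succ n ih =>
    push_cast
    push_cast at hk
    rcases eq_or_ne (n : K) 0 with h0 | h0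
    · rw [h0, zero_add, ord_one hv]
    · exact ord_add_ge hv (fun _ => ih h0) (fun _ => le_of_eq (ord_one hv).symm) hk

lemma ord_intCast (hv : IsOrd v) (k : ℤ) (hk : (k : K) ≠ 0) : 0 ≤ v (k : K) := by
  rcases le_or_gt 0 k with h | h
  · lift k to ℕ using h
    exact_mod_cast ord_natCast hv _ (by exact_mod_cast hk)
  · have hm : (((-k).toNat : ℕ) : K) = -(k:K) := by
      have : (((-k).toNat : ℕ) : ℤ) = -k := Int.toNat_of_nonneg (by omega)
      exact_mod_cast congrArg (fun z : ℤ => (z : K)) this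
    have := ord_natCast hv (-k).toNat (by rw [hm]; simpa using hk)
    rwa [hm, ord_neg hv hk] at this

lemma muSet_finite (v : K → ℤ) (F : Polynomial K) :
    {m : ℤ | ∃ i, F.coeff i ≠ 0 ∧ v (F.coeff i) = m}.Finite := by
  apply Set.Finite.subset ((F.support : Set ℕ).toFinite.image (fun i => v (F.coeff i)))
  rintro m ⟨i, hi, rfl⟩
  exact ⟨i, by simpa using hi, rfl⟩

lemma muSet_nonempty (v : K → ℤ) {F : Polynomial K} (hF : F ≠ 0) :
    {m : ℤ | ∃ i, F.coeff i ≠ 0 ∧ v (F.coeff i) = m}.Nonempty := by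
  by_contra h
  push_neg at h
  simp only [Set.not_nonempty_iff_eq_empty, Set.eq_empty_iff_forall_notMem] at h
  exact hF (Polynomial.ext fun n => by
    by_contra hn
    exact h (v (F.coeff n)) ⟨n, by simpa using hn, rfl⟩)

lemma muInv_le (v : K → ℤ) {F : Polynomial K} {i : ℕ} (hi : F.coeff i ≠ 0) :
    muInv v F ≤ v (F.coeff i) :=
  csInf_le (muSet_finite v F).bddBelow ⟨i, hi, rfl⟩

lemma muInv_mem (v : K → ℤ) {F : Polynomial K} (hF : F ≠ 0) :
    ∃ i, F.coeff i ≠ 0 ∧ v (F.coeff i) = muInv v F :=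
  (muSet_nonempty v hF).csInf_mem (muSet_finite v F)

lemma lamInv_spec (v : K → ℤ) {F : Polynomial K} (hF : F ≠ 0) :
    F.coeff (lamInv v F) ≠ 0 ∧ v (F.coeff (lamInv v F)) = muInv v F :=
  Nat.sInf_mem (muInv_mem v hF)

lemma lamInv_min (v : K → ℤ) {F : Polynomial K} {i : ℕ} (hi : i < lamInv v F)
    (h0 : F.coeff i ≠ 0) : muInv v F < v (F.coeff i) := by
  rcases lt_or_eq_of_le (muInv_le v h0) with h | h
  · exact h
  · have hm : i ∈ {i : ℕ | F.coeff i ≠ 0 ∧ v (F.coeff i) = muInv v F} := ⟨h0, h.symm⟩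
    have h2 : lamInv v F ≤ i := Nat.sInf_le hm
    omega

/-- Characterization of μ and λ. -/
lemma char_mu_lam (v : K → ℤ) {F : Polynomial K} {m : ℤ} {ℓ : ℕ}
    (hge : ∀ i, F.coeff i ≠ 0 → m ≤ v (F.coeff i))
    (hℓ : F.coeff ℓ ≠ 0) (hvℓ : v (F.coeff ℓ) = m)
    (hlt : ∀ i < ℓ, F.coeff i ≠ 0 → m < v (F.coeff i)) :
    F ≠ 0 ∧ muInv v F = m ∧ lamInv v F = ℓ := by
  have hF : F ≠ 0 := fun h => hℓ (by simp [h])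
  have hmu : muInv v F = m := by
    apply IsLeast.csInf_eq
    exact ⟨⟨ℓ, hℓ, hvℓ⟩, by rintro m' ⟨i, hi, rfl⟩; exact hge i hi⟩
  refine ⟨hF, hmu, ?_⟩
  have hmem : ℓ ∈ {i : ℕ | F.coeff i ≠ 0 ∧ v (F.coeff i) = muInv v F} := ⟨hℓ, by rw [hmu, hvℓ]⟩
  have h1 : lamInv v F ≤ ℓ := Nat.sInf_le hmem
  rcases lt_or_eq_of_le h1 with h | h
  · obtain ⟨c1, c2⟩ := lamInv_spec v hF
    have := hlt _ h c1
    rw [c2, hmu] at this; omega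
  · exact h

/-- Addition lemma: if all coefficients of `A` have valuation ≥ m, strictly for
indices ≤ ℓ, and `G` has μ attained at ℓ in the right way, then the invariants
of `A + G` are `m` and `ℓ`. -/
lemma add_mu_lam (hv : IsOrd v) {A G : Polynomial K} {m : ℤ} {ℓ : ℕ}
    (hA : ∀ i, A.coeff i ≠ 0 → m ≤ v (A.coeff i))
    (hA' : ∀ i ≤ ℓ, A.coeff i ≠ 0 → m < v (A.coeff i))
    (hG : ∀ i, G.coeff i ≠ 0 → m ≤ v (G.coeff i))
    (hGℓ : G.coeff ℓ ≠ 0) (hGvℓ : v (G.coeff ℓ) = m)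
    (hG' : ∀ i < ℓ, G.coeff i ≠ 0 → m < v (G.coeff i)) :
    A + G ≠ 0 ∧ muInv v (A + G) = m ∧ lamInv v (A + G) = ℓ := by
  apply char_mu_lam v
  · intro i hi
    rw [Polynomial.coeff_add] at hi ⊢
    exact ord_add_ge hv (hA i) (hG i) hi
  · rw [Polynomial.coeff_add, add_comm]
    exact (ord_add_eq hv hGℓ hGvℓ (hA' ℓ le_rfl)).1
  · rw [Polynomial.coeff_add, add_comm]
    exact (ord_add_eq hv hGℓ hGvℓ (hA' ℓ le_rfl)).2
  · intro i hi h0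
    rw [Polynomial.coeff_add] at h0 ⊢
    exact ord_add_gt hv (hA' i (le_of_lt hi)) (hG' i hi) h0

lemma ord_sum_eq (hv : IsOrd v) {ι : Type*} [DecidableEq ι] {s : Finset ι} {f : ι → K} {m : ℤ}
    {j : ι} (hj : j ∈ s) (h0 : f j ≠ 0) (hvj : v (f j) = m)
    (hrest : ∀ i ∈ s, i ≠ j → f i ≠ 0 → m < v (f i)) :
    ∑ i ∈ s, f i ≠ 0 ∧ v (∑ i ∈ s, f i) = m := by
  rw [← Finset.add_sum_erase s f hj]
  refine ord_add_eq hv h0 hvj ?_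
  intro hne
  exact ord_sum_gt hv
    (fun i hi => hrest i (Finset.mem_of_mem_erase hi) (Finset.ne_of_mem_erase hi)) hne

lemma mul_mu_lam (hv : IsOrd v) {F G : Polynomial K} (hF : F ≠ 0) (hG : G ≠ 0) :
    muInv v (F * G) = muInv v F + muInv v G ∧
      lamInv v (F * G) = lamInv v F + lamInv v G := by
  set mF := muInv v F; set mG := muInv v G
  set lF := lamInv v F; set lG := lamInv v G
  have key := char_mu_lam v (F := F * G) (m := mF + mG) (ℓ := lF + lG) ?_ ?_ ?_ ?_
  · exact ⟨key.2.1, key.2.2⟩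
  · intro k hk
    rw [Polynomial.coeff_mul] at hk ⊢
    refine ord_sum_ge hv ?_ hk
    rintro ⟨i, j⟩ _ hij
    have hi : F.coeff i ≠ 0 := left_ne_zero_of_mul hij
    have hj : G.coeff j ≠ 0 := right_ne_zero_of_mul hij
    rw [hv.1 _ _ hi hj]
    exact add_le_add (muInv_le v hi) (muInv_le v hj)
  · rw [Polynomial.coeff_mul]
    refine (ord_sum_eq hv (m := mF + mG) (j := (lF, lG)) ?_ ?_ ?_ ?_).1
    · simp [Finset.mem_antidiagonal]
    · exact mul_ne_zero (lamInv_spec v hF).1 (lamInv_spec v hG).1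
    · rw [hv.1 _ _ (lamInv_spec v hF).1 (lamInv_spec v hG).1,
        (lamInv_spec v hF).2, (lamInv_spec v hG).2]
    · rintro ⟨i, j⟩ hmem hne hij
      have hi : F.coeff i ≠ 0 := left_ne_zero_of_mul hij
      have hj : G.coeff j ≠ 0 := right_ne_zero_of_mul hij
      rw [Finset.HasAntidiagonal.mem_antidiagonal] at hmem
      rw [hv.1 _ _ hi hj]
      rcases lt_trichotomy i lF with h | h | h
      · have := lamInv_min v h hi
        have := muInv_le v hj
        omega
      · exfalso; apply hne
        simp only [Prod.mk.injEq]
        constructor <;> omega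
      · have hjlt : j < lG := by omega
        have := lamInv_min v hjlt hj
        have := muInv_le v hi
        omega
  · rw [Polynomial.coeff_mul]
    exact (ord_sum_eq hv (m := mF + mG) (j := (lF, lG)) (by simp [Finset.mem_antidiagonal])
      (mul_ne_zero (lamInv_spec v hF).1 (lamInv_spec v hG).1)
      (by rw [hv.1 _ _ (lamInv_spec v hF).1 (lamInv_spec v hG).1,
        (lamInv_spec v hF).2, (lamInv_spec v hG).2])
      (by
        rintro ⟨i, j⟩ hmem hne hij
        have hi : F.coeff i ≠ 0 := left_ne_zero_of_mul hij
        have hj : G.coeff j ≠ 0 := right_ne_zero_of_mul hij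
        rw [Finset.HasAntidiagonal.mem_antidiagonal] at hmem
        rw [hv.1 _ _ hi hj]
        rcases lt_trichotomy i lF with h | h | h
        · have := lamInv_min v h hi
          have := muInv_le v hj
          omega
        · exfalso; apply hne
          simp only [Prod.mk.injEq]
          constructor <;> omega
        · have hjlt : j < lG := by omega
          have := lamInv_min v hjlt hj
          have := muInv_le v hi
          omega)).2
  · intro k hk h0
    rw [Polynomial.coeff_mul] at h0 ⊢
    refine ord_sum_gt hv ?_ h0
    rintro ⟨i, j⟩ hmem hij
    have hi : F.coeff i ≠ 0 := left_ne_zero_of_mul hij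
    have hj : G.coeff j ≠ 0 := right_ne_zero_of_mul hij
    rw [Finset.HasAntidiagonal.mem_antidiagonal] at hmem
    rw [hv.1 _ _ hi hj]
    rcases lt_or_ge i lF with h | h
    · have := lamInv_min v h hi
      have := muInv_le v hj
      omega
    · have hjlt : j < lG := by omega
      have := lamInv_min v hjlt hj
      have := muInv_le v hi
      omega

noncomputable def nuInt (p n : ℕ) : Polynomial ℤ :=
  ∑ k ∈ Finset.range p, (1 + Polynomial.X) ^ (k * p ^ (n - 1))

lemma nuPoly_eq_map_s1 (p n : ℕ) : nuPoly K p n = (nuInt p n).map (Int.castRingHom K) := by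
  simp [nuPoly, nuInt, Polynomial.map_sum, Polynomial.map_pow]

lemma nuInt_map_zmod {p : ℕ} (hp : p.Prime) (n : ℕ) :
    (nuInt p n).map (Int.castRingHom (ZMod p)) = Polynomial.X ^ ((p - 1) * p ^ (n - 1)) := by
  haveI : Fact p.Prime := ⟨hp⟩
  set q := p ^ (n - 1) with hq
  have hmap : (nuInt p n).map (Int.castRingHom (ZMod p)) =
      ∑ k ∈ Finset.range p, ((1 + Polynomial.X : Polynomial (ZMod p)) ^ q) ^ k := by
    simp [nuInt, Polynomial.map_sum, Polynomial.map_pow, ← pow_mul, mul_comm, hq]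
  have hfrob : ((1 : Polynomial (ZMod p)) + Polynomial.X) ^ q =
      1 + Polynomial.X ^ q := by
    rw [hq, add_pow_char_pow]
    simp
  rw [hmap, hfrob]
  have hgeom := geom_sum_mul (1 + Polynomial.X ^ q : Polynomial (ZMod p)) p
  have hstep : ((1 : Polynomial (ZMod p)) + Polynomial.X ^ q) ^ p = 1 + (Polynomial.X ^ q) ^ p := by
    rw [add_pow_char, one_pow]
  rw [hstep] at hgeom
  simp only [add_sub_cancel_left] at hgeom
  have hXq : (Polynomial.X ^ q : Polynomial (ZMod p)) ≠ 0 := pow_ne_zero _ Polynomial.X_ne_zero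
  apply mul_right_cancel₀ hXq
  rw [hgeom, ← pow_mul, ← pow_add]
  congr 1
  have hp1 : 1 ≤ p := hp.one_lt.le
  obtain ⟨c, rfl⟩ := Nat.exists_eq_add_of_le hp1
  simp only [Nat.add_sub_cancel_left]
  ring

lemma nuInt_coeff_cast {p : ℕ} (hp : p.Prime) (n j : ℕ) :
    (((nuInt p n).coeff j : ℤ) : ZMod p) = if j = (p - 1) * p ^ (n - 1) then 1 else 0 := by
  have := congrArg (fun Q => Q.coeff j) (nuInt_map_zmod hp n)
  simpa [Polynomial.coeff_map, Polynomial.coeff_X_pow] using this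

lemma nu_coeff_dvd {p : ℕ} (hp : p.Prime) (n : ℕ) {j : ℕ} (hj : j ≠ (p - 1) * p ^ (n - 1)) :
    (p : ℤ) ∣ (nuInt p n).coeff j := by
  have h := nuInt_coeff_cast hp n j
  rw [if_neg hj] at h
  exact_mod_cast (ZMod.intCast_zmod_eq_zero_iff_dvd _ p).mp h

lemma nu_coeff_top {p : ℕ} (hp : p.Prime) (n : ℕ) :
    (p : ℤ) ∣ ((nuInt p n).coeff ((p - 1) * p ^ (n - 1)) - 1) := by
  have h := nuInt_coeff_cast hp n ((p - 1) * p ^ (n - 1))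
  rw [if_pos rfl] at h
  have : (((nuInt p n).coeff ((p - 1) * p ^ (n - 1)) - 1 : ℤ) : ZMod p) = 0 := by
    push_cast [h]; ring
  exact_mod_cast (ZMod.intCast_zmod_eq_zero_iff_dvd _ p).mp this

lemma nu_spec (hv : IsOrd v) {p : ℕ} (hres : ResidueCharP v p) (hp : p.Prime) (n : ℕ) :
    (nuPoly K p n).coeff ((p - 1) * p ^ (n - 1)) ≠ 0 ∧
      v ((nuPoly K p n).coeff ((p - 1) * p ^ (n - 1))) = 0 ∧
      ∀ j, j ≠ (p - 1) * p ^ (n - 1) → (nuPoly K p n).coeff j ≠ 0 →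
        0 < v ((nuPoly K p n).coeff j) := by
  set D := (p - 1) * p ^ (n - 1) with hD
  have hcoeff : ∀ j, (nuPoly K p n).coeff j = (((nuInt p n).coeff j : ℤ) : K) := by
    intro j
    rw [nuPoly_eq_map_s1, Polynomial.coeff_map]
    rfl
  have hpmul : ∀ d : ℤ, ((p : K) * (d : K) ≠ 0) → 0 < v ((p : K) * (d : K)) := by
    intro d hne
    have hp0 : (p : K) ≠ 0 := left_ne_zero_of_mul hne
    have hd0 : (d : K) ≠ 0 := right_ne_zero_of_mul hne
    have hvp : 1 ≤ v (p : K) := by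
      rcases hres with h | h
      · exact absurd h hp0
      · exact h
    have hvd := ord_intCast hv d hd0
    rw [hv.1 _ _ hp0 hd0]
    omega
  obtain ⟨c, hc⟩ := nu_coeff_top hp n
  rw [← hD] at hc
  have hcD : (nuPoly K p n).coeff D = 1 + (p : K) * (c : K) := by
    rw [hcoeff]
    have h2 : (nuInt p n).coeff D = 1 + p * c := by omega
    rw [h2]; push_cast; ring
  refine ⟨?_, ?_, ?_⟩
  · rw [hcD]
    exact (ord_add_eq hv one_ne_zero (ord_one hv) (fun h => hpmul c h)).1
  · rw [hcD]
    exact (ord_add_eq hv one_ne_zero (ord_one hv) (fun h => hpmul c h)).2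
  · intro j hj hne
    obtain ⟨d, hd⟩ := nu_coeff_dvd hp n hj
    have : (nuPoly K p n).coeff j = (p : K) * (d : K) := by
      rw [hcoeff, hd]; push_cast; ring
    rw [this] at hne ⊢
    exact hpmul d hne

lemma integral_iff {F : Polynomial K} (hF : F ≠ 0) :
    IntegralPoly v F ↔ 0 ≤ muInv v F := by
  constructor
  · intro h
    obtain ⟨i, hi, he⟩ := muInv_mem v hF
    rw [← he]; exact h i hi
  · intro h i hi
    exact le_trans h (muInv_le v hi)


end AuxOrd

/-- Abstract core of Theorem B (Theorem 4.4): dichotomy between stabilisation of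
the Iwasawa invariants and maximality of the λ-invariants. -/
theorem dichotomy_of_mazur_tate_invariants
    {K : Type*} [Field K] (p : ℕ) (hp : p.Prime)
    (v : K → ℤ) (hv : IsOrd v) (hres : ResidueCharP v p)
    (α : K) (hα0 : α ≠ 0) (hα : v α = 0)
    (lam₀ n₀ : ℕ) (hn₀ : 1 ≤ n₀)
    (F A : ℕ → Polynomial K)
    (hF0 : ∀ n, F n ≠ 0)
    (hdeg : ∀ n, (F n).degree < (p ^ n : ℕ))
    (ht : ∃ t : ℕ, ∀ n i, (F n).coeff i ≠ 0 → -(t : ℤ) ≤ v ((F n).coeff i))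
    (hAdef : ∀ n, 1 ≤ n →
      A n = F n - Polynomial.C α⁻¹ * nuPoly K p n * F (n - 1))
    (hAint : ∀ n, 1 ≤ n → IntegralPoly v (A n))
    (hAinv : ∀ n, n₀ ≤ n → A n ≠ 0 ∧ muInv v (A n) = 0 ∧ lamInv v (A n) = lam₀) :
    ((∀ n, IntegralPoly v (F n)) ∧
        ∃ N, ∀ n, N ≤ n → muInv v (F n) = 0 ∧ lamInv v (F n) = lam₀) ∨
      ((∀ n, ¬ IntegralPoly v (F n)) ∧ muInv v (F 0) < 0 ∧
        ∀ n, muInv v (F n) = muInv v (F 0) ∧ lamInv v (F n) = p ^ n - 1) := by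
  have hp2 : 2 ≤ p := hp.two_le
  -- facts about ν
  have hnu : ∀ n : ℕ, nuPoly K p n ≠ 0 ∧ muInv v (nuPoly K p n) = 0 ∧
      lamInv v (nuPoly K p n) = (p - 1) * p ^ (n - 1) := by
    intro n
    obtain ⟨h1, h2, h3⟩ := nu_spec hv hres hp n
    refine char_mu_lam v ?_ h1 h2 ?_
    · intro j hj
      rcases eq_or_ne j ((p - 1) * p ^ (n - 1)) with rfl | hne
      · exact le_of_eq h2.symm
      · exact (h3 j hne hj).le
    · intro j hjlt hj0
      exact h3 j (by omega) hj0
  -- facts about C α⁻¹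
  have hC : Polynomial.C α⁻¹ ≠ 0 ∧ muInv v (Polynomial.C α⁻¹) = 0 ∧
      lamInv v (Polynomial.C α⁻¹) = 0 := by
    have hαinv : α⁻¹ ≠ 0 := inv_ne_zero hα0
    have hv0 : v α⁻¹ = 0 := by rw [ord_inv hv hα0, hα]; ring
    refine char_mu_lam v ?_ (by simpa using hαinv) (by simpa using hv0) ?_
    · intro i hi
      rcases eq_or_ne i 0 with rfl | hne
      · simpa [hv0] using le_refl (0 : ℤ)
      · simp [Polynomial.coeff_C, hne] at hi
    · intro i hi; omega
  -- facts about the product term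
  have hprod : ∀ n : ℕ, 1 ≤ n →
      (Polynomial.C α⁻¹ * nuPoly K p n * F (n - 1) ≠ 0 ∧
        muInv v (Polynomial.C α⁻¹ * nuPoly K p n * F (n - 1)) = muInv v (F (n - 1)) ∧
        lamInv v (Polynomial.C α⁻¹ * nuPoly K p n * F (n - 1)) =
          (p - 1) * p ^ (n - 1) + lamInv v (F (n - 1))) := by
    intro n _
    have hCν : Polynomial.C α⁻¹ * nuPoly K p n ≠ 0 := mul_ne_zero hC.1 (hnu n).1
    have h1 := mul_mu_lam hv hC.1 (hnu n).1
    have h2 := mul_mu_lam hv hCν (hF0 (n - 1))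
    refine ⟨mul_ne_zero hCν (hF0 (n - 1)), ?_, ?_⟩
    · rw [h2.1, h1.1, hC.2.1, (hnu n).2.1]; ring
    · rw [h2.2, h1.2, hC.2.2, (hnu n).2.2]; ring
  have hFsum : ∀ n : ℕ, 1 ≤ n →
      F n = Polynomial.C α⁻¹ * nuPoly K p n * F (n - 1) + A n := by
    intro n hn
    rw [hAdef n hn]; ring
  -- lower bound for D n
  have hDge : ∀ n : ℕ, 1 ≤ n → n ≤ (p - 1) * p ^ (n - 1) := by
    intro n hn
    have h1 : n - 1 < 2 ^ (n - 1) := Nat.lt_two_pow_self (n := n - 1)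
    have h2 : 2 ^ (n - 1) ≤ p ^ (n - 1) := Nat.pow_le_pow_left hp2 (n - 1)
    have h3 : p ^ (n - 1) ≤ (p - 1) * p ^ (n - 1) := by
      have : 1 ≤ p - 1 := by omega
      nlinarith
    omega
  by_cases hI0 : IntegralPoly v (F 0)
  · -- case (a)
    have hIall : ∀ n, IntegralPoly v (F n) := by
      intro n
      induction n with
      | zero => exact hI0
      | succ m ih =>
        have hm1 : 1 ≤ m + 1 := by omega
        rw [hFsum (m + 1) hm1]
        have hPint : IntegralPoly v (Polynomial.C α⁻¹ * nuPoly K p (m + 1) * F m) := by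
          rw [integral_iff (by simpa using (hprod (m + 1) hm1).1)]
          have := (hprod (m + 1) hm1).2.1
          simp only [Nat.add_sub_cancel] at this ⊢
          rw [this]
          exact ((integral_iff (hF0 m)).mp ih)
        intro i hi
        rw [Polynomial.coeff_add] at hi ⊢
        refine ord_add_ge hv ?_ ?_ hi
        · exact fun h => by simpa using hPint i (by simpa using h)
        · exact fun h => hAint (m + 1) hm1 i h
    left
    refine ⟨hIall, max n₀ (lam₀ + 1), ?_⟩
    intro n hn
    have hn1 : 1 ≤ n := le_trans hn₀ (le_trans (le_max_left _ _) hn)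
    have hnn₀ : n₀ ≤ n := le_trans (le_max_left _ _) hn
    have hnl : lam₀ + 1 ≤ n := le_trans (le_max_right _ _) hn
    obtain ⟨hAne, hAmu, hAlam⟩ := hAinv n hnn₀
    obtain ⟨hPne, hPmu, hPlam⟩ := hprod n hn1
    have hμprev : 0 ≤ muInv v (F (n - 1)) := (integral_iff (hF0 (n - 1))).mp (hIall (n - 1))
    have hlamP : lam₀ < lamInv v (Polynomial.C α⁻¹ * nuPoly K p n * F (n - 1)) := by
      have := hDge n hn1
      omega
    rw [hFsum n hn1]
    have key := add_mu_lam hv (A := Polynomial.C α⁻¹ * nuPoly K p n * F (n - 1)) (G := A n)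
      (m := 0) (ℓ := lam₀) ?_ ?_ ?_ ?_ ?_ ?_
    · exact ⟨key.2.1, key.2.2⟩
    · intro i hi
      have := muInv_le v hi
      omega
    · intro i hile hi
      have := lamInv_min v (F := Polynomial.C α⁻¹ * nuPoly K p n * F (n - 1))
        (by omega : i < lamInv v (Polynomial.C α⁻¹ * nuPoly K p n * F (n - 1))) hi
      omega
    · intro i hi
      have := muInv_le v hi
      rw [hAmu] at this
      exact this
    · rw [← hAlam] at *
      exact (lamInv_spec v hAne).1
    · rw [← hAlam]
      rw [(lamInv_spec v hAne).2, hAmu]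
    · intro i hilt hi
      rw [← hAlam] at hilt
      have := lamInv_min v hilt hi
      rw [hAmu] at this
      exact this
  · -- case (b)
    have hμ0 : muInv v (F 0) < 0 := by
      by_contra h
      exact hI0 ((integral_iff (hF0 0)).mpr (by omega))
    have hlam0 : lamInv v (F 0) = 0 := by
      have hd : (F 0).natDegree = 0 := by
        have := hdeg 0
        simp only [pow_zero] at this
        have h2 : (F 0).natDegree < 1 :=
          (Polynomial.natDegree_lt_iff_degree_lt (n := 1) (hF0 0)).mpr (by simpa using this)
        omega
      have h1 : lamInv v (F 0) ≤ (F 0).natDegree :=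
        Polynomial.le_natDegree_of_ne_zero (lamInv_spec v (hF0 0)).1
      omega
    have hkey : ∀ n, muInv v (F n) = muInv v (F 0) ∧ lamInv v (F n) = p ^ n - 1 := by
      intro n
      induction n with
      | zero => exact ⟨rfl, by simpa using hlam0⟩
      | succ m ih =>
        have hm1 : 1 ≤ m + 1 := by omega
        obtain ⟨hPne, hPmu, hPlam⟩ := hprod (m + 1) hm1
        simp only [Nat.add_sub_cancel] at hPne hPmu hPlam
        rw [ih.1] at hPmu
        rw [ih.2] at hPlam
        have harith : (p - 1) * p ^ m + (p ^ m - 1) = p ^ (m + 1) - 1 := by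
          have hpow : p ^ (m + 1) = p * p ^ m := by ring
          have hpm : 1 ≤ p ^ m := Nat.one_le_pow _ _ (by omega)
          obtain ⟨c, rfl⟩ : ∃ c, p = 1 + c := ⟨p - 1, by omega⟩
          simp only [Nat.add_sub_cancel_left] at *
          have : (1 + c) * (1 + c) ^ m = (1 + c) ^ m + c * (1 + c) ^ m := by ring
          omega
        rw [hFsum (m + 1) hm1]
        simp only [Nat.add_sub_cancel]
        have key := add_mu_lam hv (A := A (m + 1))
          (G := Polynomial.C α⁻¹ * nuPoly K p (m + 1) * F m)
          (m := muInv v (F 0)) (ℓ := lamInv v (Polynomial.C α⁻¹ * nuPoly K p (m + 1) * F m))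
          ?_ ?_ ?_ ?_ ?_ ?_
        · rw [add_comm]
          refine ⟨key.2.1, ?_⟩
          rw [key.2.2, hPlam, harith]
        · intro i hi
          have := hAint (m + 1) hm1 i hi
          omega
        · intro i _ hi
          have := hAint (m + 1) hm1 i hi
          omega
        · intro i hi
          have := muInv_le v hi
          omega
        · exact (lamInv_spec v hPne).1
        · rw [(lamInv_spec v hPne).2, hPmu]
        · intro i hilt hi
          have := lamInv_min v hilt hi
          omega
    right
    refine ⟨?_, hμ0, hkey⟩
    intro n hInt
    have := (integral_iff (hF0 n)).mp hInt
    rw [(hkey n).1] at this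
    omega
end
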